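/- arXiv:1712.02855 — 4 statements merged into one kernel-verified Lean document; each statement's English description precedes it below -/
import Mathlib

section
/- Let ν ≥ 0, k ∈ ℤ with k ≠ 0, and η ∈ ℝ. The scalar ODE f'(t) = -ν(k² + (η - kt)²) f(t) with f(0) = f₀ has solution f(t) = exp(-ν ∫₀ᵗ (k² + (η - ks)²) ds) f₀, and this solution satisfies |f(t)| ≤ exp(-ν k² t³ / 12) |f₀| for all t ≥ 0. -/
open Real intervalIntegral

/-- The Fourier-side linearized Navier–Stokes evolution near Couette: the solution of
`f'(t) = -ν (k² + (η - kt)²) f(t)`, `f(0) = f₀` is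
`f(t) = exp(-ν ∫₀ᵗ (k² + (η - ks)²) ds) f₀` and satisfies the enhanced dissipation
estimate `|f(t)| ≤ exp(-ν k² t³ / 12) |f₀|` for `t ≥ 0`. -/
theorem stmt_2 (ν : ℝ) (hν : 0 ≤ ν) (k : ℤ) (hk : k ≠ 0) (η : ℝ)
    (f : ℝ → ℝ) (f₀ : ℝ) (hf0 : f 0 = f₀)
    (hf : ∀ t, HasDerivAt f (-ν * ((k:ℝ)^2 + (η - k*t)^2) * f t) t) :
    (∀ t, f t = Real.exp (-ν * ∫ s in (0:ℝ)..t, ((k:ℝ)^2 + (η - k*s)^2)) * f₀) ∧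
    (∀ t ≥ (0:ℝ), |f t| ≤ Real.exp (-ν * (k:ℝ)^2 * t^3 / 12) * |f₀|) := by
  set g : ℝ → ℝ := fun s => (k:ℝ)^2 + (η - k*s)^2 with hg
  have hgc : Continuous g := by fun_prop
  set F : ℝ → ℝ := fun t => ∫ s in (0:ℝ)..t, g s with hFdef
  have hFd : ∀ t, HasDerivAt F (g t) t := fun t =>
    (hgc.integral_hasStrictDerivAt 0 t).hasDerivAt
  -- explicit formula for F
  have hFval : ∀ t, F t = ((k:ℝ)^2 + η^2)*t - η*k*t^2 + (k:ℝ)^2*t^3/3 := by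
    intro t
    have hP : ∀ s ∈ Set.uIcc (0:ℝ) t, HasDerivAt
        (fun s => ((k:ℝ)^2 + η^2)*s - η*k*s^2 + (k:ℝ)^2*s^3/3) (g s) s := by
      intro s _
      have : HasDerivAt (fun s => ((k:ℝ)^2 + η^2)*s - η*k*s^2 + (k:ℝ)^2*s^3/3)
          (((k:ℝ)^2 + η^2) - η*k*(2*s) + (k:ℝ)^2*(3*s^2)/3) s := by
        apply HasDerivAt.add
        apply HasDerivAt.sub
        · simpa using (hasDerivAt_id s).const_mul ((k:ℝ)^2 + η^2)
        · simpa using ((hasDerivAt_pow 2 s).const_mul (η*k))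
        · simpa using ((hasDerivAt_pow 3 s).const_mul ((k:ℝ)^2)).div_const 3
      convert this using 1
      simp only [hg]; ring
    have := intervalIntegral.integral_eq_sub_of_hasDerivAt hP
      (hgc.intervalIntegrable 0 t)
    simp only [hFdef]
    rw [this]; ring
  -- the constant function
  have hconst : ∀ t, Real.exp (ν * F t) * f t = f₀ := by
    have hdiff : Differentiable ℝ (fun t => Real.exp (ν * F t) * f t) := by
      intro t
      exact (((hFd t).const_mul ν).exp.mul (hf t)).differentiableAt
    have hder : ∀ t, deriv (fun t => Real.exp (ν * F t) * f t) t = 0 := by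
      intro t
      have h1 : HasDerivAt (fun t => Real.exp (ν * F t) * f t)
          (Real.exp (ν * F t) * (ν * g t) * f t +
            Real.exp (ν * F t) * (-ν * g t * f t)) t := by
        exact ((hFd t).const_mul ν).exp.mul (hf t)
      have := h1.deriv
      rw [this]; ring
    intro t
    have := is_const_of_deriv_eq_zero hdiff hder t 0
    simpa [hf0, hFdef] using this
  have hsol : ∀ t, f t = Real.exp (-ν * F t) * f₀ := by
    intro t
    have h := hconst t
    have : Real.exp (-ν * F t) * (Real.exp (ν * F t) * f t) = Real.exp (-ν * F t) * f₀ := by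
      rw [h]
    rw [← this, ← mul_assoc, ← Real.exp_add]
    simp
  constructor
  · exact hsol
  · intro t ht
    rw [hsol t, abs_mul, abs_of_pos (Real.exp_pos _)]
    apply mul_le_mul_of_nonneg_right _ (abs_nonneg _)
    rw [Real.exp_le_exp, hFval t]
    have h1 : 0 ≤ t * (η - (k:ℝ)*t/2)^2 := mul_nonneg ht (sq_nonneg _)
    have h2 : (0:ℝ) ≤ (k:ℝ)^2 * t := mul_nonneg (sq_nonneg _) ht
    nlinarith [mul_nonneg hν (add_nonneg h2 h1)]
end

section
/- For all k ∈ ℤ with k ≠ 0, all η ∈ ℝ, and all t ≥ 0: ∫₀ᵗ (k² + (η - ks)²) ds ≥ k² t³ / 12. -/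
open intervalIntegral

theorem integral_sq_sub_mul (η c t : ℝ) :
    ∫ s in (0:ℝ)..t, (η - c * s) ^ 2 = t * (η - c * t / 2) ^ 2 + c ^ 2 * t ^ 3 / 12 := by
  have hF : ∀ s, HasDerivAt (fun s : ℝ => η ^ 2 * s - η * c * s ^ 2 + c ^ 2 * s ^ 3 / 3)
      ((η - c * s) ^ 2) s := fun s =>
    ((((hasDerivAt_id s).const_mul (η ^ 2)).sub ((hasDerivAt_pow 2 s).const_mul (η * c))).add
      (((hasDerivAt_pow 3 s).const_mul (c ^ 2)).div_const 3)).congr_deriv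
      (by simp only [mul_one, Nat.cast_ofNat, Nat.add_one_sub_one, pow_one]; ring)
  rw [integral_eq_sub_of_hasDerivAt (fun s _ => hF s)
    ((by fun_prop : Continuous fun s : ℝ => (η - c * s) ^ 2).intervalIntegrable _ _)]
  ring

theorem sq_mul_cube_div_twelve_le_integral_sq_sub_mul (η c : ℝ) {t : ℝ} (ht : 0 ≤ t) :
    c ^ 2 * t ^ 3 / 12 ≤ ∫ s in (0:ℝ)..t, (η - c * s) ^ 2 := by
  rw [integral_sq_sub_mul]
  exact le_add_of_nonneg_left (by positivity)

theorem stmt_3_general (k : ℤ) (η : ℝ) (t : ℝ) (ht : 0 ≤ t) :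
    (k:ℝ)^2 * t^3 / 12 ≤ ∫ s in (0:ℝ)..t, ((k:ℝ)^2 + (η - k*s)^2) := by
  rw [integral_add intervalIntegrable_const
    ((by fun_prop : Continuous fun s : ℝ => (η - k * s) ^ 2).intervalIntegrable _ _),
    integral_const, smul_eq_mul, sub_zero]
  have hconst : 0 ≤ t * (k : ℝ) ^ 2 := by positivity
  linarith [sq_mul_cube_div_twelve_le_integral_sq_sub_mul η k ht]

/-- The key uniform-in-`η` lower bound behind the enhanced dissipation time-scale
`ν^(-1/3)`: for `k ≠ 0`, `∫₀ᵗ (k² + (η - ks)²) ds ≥ k² t³ / 12` for all `t ≥ 0`. -/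
theorem stmt_3 (k : ℤ) (hk : k ≠ 0) (η : ℝ) (t : ℝ) (ht : 0 ≤ t) :
    (k:ℝ)^2 * t^3 / 12 ≤ ∫ s in (0:ℝ)..t, ((k:ℝ)^2 + (η - k*s)^2) :=
  stmt_3_general k η t ht
end

section
/- With M as above (M'(t) = -ν^{1/3} M(t)/(ν^{2/3}(t-η/k)² + 1), M(0)=1, k ≠ 0), there is an absolute constant C such that for all t ≥ 0: 1 ≤ C ν^{-1/6} (√(-M'(t)M(t)) + ν^{1/2} |(k, η - kt)|). -/
/-!
Writing `μ = ν^{1/6}` and `c = η/k`, the multiplier is `M t = exp (arctan (-μ² c) - arctan (μ² (t - c)))`,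
so `M ≥ e^{-π}` and `-M' M = μ² M² / (μ⁴ (t - c)² + 1)`. Near the critical time, `μ² |t - c| ≤ 1`,
this is at least `μ² e^{-2π} / 2`; away from it, `|η - k t| = |k| |t - c| > μ⁻²` because `|k| ≥ 1`,
so the dissipative term `μ³ |(k, η - k t)|` is already at least `μ`.
-/

open Real

/-- With `r = ν^{1/3}` and `c = η/k` this is the paper's `-M'/M`. -/
noncomputable def ghostRate (r c t : ℝ) : ℝ := r / (r ^ 2 * (t - c) ^ 2 + 1)

theorem hasDerivAt_arctan_ghostRate (r c t : ℝ) :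
    HasDerivAt (fun s => arctan (r * (s - c))) (ghostRate r c t) t := by
  refine (((hasDerivAt_id t).sub_const c).const_mul r).arctan.congr_deriv ?_
  rw [ghostRate, id, mul_one]
  field_simp
  ring

theorem eq_mul_exp_sub_of_hasDerivAt {M a G : ℝ → ℝ} (hG : ∀ t, HasDerivAt G (a t) t)
    (hM : ∀ t, HasDerivAt M (-a t * M t) t) (t : ℝ) : M t = M 0 * exp (G 0 - G t) := by
  have hconst : ∀ s, HasDerivAt (fun s => M s * exp (G s)) 0 s := fun s =>
    ((hM s).mul (hG s).exp).congr_deriv (by ring)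
  have h := is_const_of_deriv_eq_zero (fun s => (hconst s).differentiableAt)
    (fun s => (hconst s).deriv) t 0
  rw [exp_sub, ← mul_div_assoc, ← h, mul_div_cancel_right₀ _ (exp_ne_zero _)]

theorem exp_neg_pi_le_of_hasDerivAt_ghostRate {M : ℝ → ℝ} {r c : ℝ} (h0 : M 0 = 1)
    (hM : ∀ t, HasDerivAt M (-ghostRate r c t * M t) t) (t : ℝ) : exp (-π) ≤ M t := by
  rw [eq_mul_exp_sub_of_hasDerivAt (hasDerivAt_arctan_ghostRate r c) hM t, h0, one_mul,
    exp_le_exp]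
  linarith [arctan_lt_pi_div_two (r * (t - c)), neg_pi_div_two_lt_arctan (r * (0 - c))]

theorem half_le_ghostRate {r c t : ℝ} (hr : 0 ≤ r) (h : r * |t - c| ≤ 1) :
    r / 2 ≤ ghostRate r c t := by
  have hsq : (r * (t - c)) ^ 2 ≤ 1 := by
    rw [← sq_abs, abs_mul, abs_of_nonneg hr]
    nlinarith [mul_nonneg hr (abs_nonneg (t - c))]
  rw [ghostRate, div_le_div_iff₀ two_pos (by positivity)]
  nlinarith

theorem mul_exp_neg_pi_div_sqrt_two_le_sqrt {μ c t m : ℝ} (hm : exp (-π) ≤ m)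
    (h : μ ^ 2 * |t - c| ≤ 1) :
    |μ| * exp (-π) / √2 ≤ √(ghostRate (μ ^ 2) c t * m ^ 2) := by
  have hrate := half_le_ghostRate (sq_nonneg μ) h
  rw [le_sqrt (by positivity) (by nlinarith [sq_nonneg (μ * m)]), div_pow, mul_pow, sq_abs,
    sq_sqrt zero_le_two, mul_div_right_comm]
  exact mul_le_mul hrate (pow_le_pow_left₀ (exp_pos _).le hm 2) (by positivity)
    ((by positivity : 0 ≤ μ ^ 2 / 2).trans hrate)

theorem le_pow_three_mul_sqrt {μ k η t : ℝ} (hμ : 0 < μ) (hk : 1 ≤ |k|)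
    (h : 1 < μ ^ 2 * |t - η / k|) : μ ≤ μ ^ 3 * √(k ^ 2 + (η - k * t) ^ 2) := by
  have hk0 : k ≠ 0 := by
    rintro rfl
    norm_num at hk
  have hdist : |t - η / k| ≤ √(k ^ 2 + (η - k * t) ^ 2) :=
    calc |t - η / k| ≤ |k| * |t - η / k| := le_mul_of_one_le_left (abs_nonneg _) hk
      _ = |η - k * t| := by
        rw [← abs_mul, abs_sub_comm, mul_sub, mul_div_cancel₀ _ hk0]
      _ = √((η - k * t) ^ 2) := (sqrt_sq_eq_abs _).symm
      _ ≤ √(k ^ 2 + (η - k * t) ^ 2) := sqrt_le_sqrt (by nlinarith [sq_nonneg k])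
  calc μ = μ * 1 := (mul_one μ).symm
    _ ≤ μ * (μ ^ 2 * |t - η / k|) := by gcongr
    _ ≤ μ ^ 3 * √(k ^ 2 + (η - k * t) ^ 2) := by
      rw [← mul_assoc, ← pow_succ']
      gcongr

theorem mul_exp_neg_pi_div_sqrt_two_le {μ k η t m : ℝ} (hμ : 0 < μ) (hk : 1 ≤ |k|)
    (hm : exp (-π) ≤ m) :
    μ * exp (-π) / √2 ≤
      √(ghostRate (μ ^ 2) (η / k) t * m ^ 2) + μ ^ 3 * √(k ^ 2 + (η - k * t) ^ 2) := by
  rcases le_or_gt (μ ^ 2 * |t - η / k|) 1 with hnear | hfar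
  · have := mul_exp_neg_pi_div_sqrt_two_le_sqrt (μ := μ) hm hnear
    rw [abs_of_pos hμ] at this
    linarith [mul_nonneg (pow_pos hμ 3).le (sqrt_nonneg (k ^ 2 + (η - k * t) ^ 2))]
  · have hconst : exp (-π) / √2 ≤ 1 := by
      rw [div_le_one (by positivity)]
      exact (exp_le_one_iff.2 (neg_nonpos.2 pi_pos.le)).trans (one_le_sqrt.2 one_le_two)
    have := le_pow_three_mul_sqrt hμ hk hfar
    rw [mul_div_assoc]
    nlinarith [sqrt_nonneg (ghostRate (μ ^ 2) (η / k) t * m ^ 2)]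

/-- The pointwise coercivity of the ghost multiplier: there is an absolute constant
`C` such that for every `ν > 0`, `k ≠ 0`, `η ∈ ℝ`, if `M` solves
`M'(t) = -ν^{1/3} M(t)/(ν^{2/3}(t - η/k)² + 1)`, `M(0) = 1`, then for all `t ≥ 0`,
`1 ≤ C ν^{-1/6} (√(-M'(t) M(t)) + ν^{1/2} |(k, η - kt)|)`. -/
theorem stmt_12 :
    ∃ C > (0:ℝ), ∀ ν : ℝ, 0 < ν → ∀ k : ℤ, k ≠ 0 → ∀ η : ℝ,
      ∀ M M' : ℝ → ℝ, M 0 = 1 →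
      (∀ t, HasDerivAt M (M' t) t) →
      (∀ t, M' t = -(ν ^ ((1:ℝ)/3) / (ν ^ ((2:ℝ)/3) * (t - η/k)^2 + 1)) * M t) →
      ∀ t ≥ (0:ℝ),
        1 ≤ C * ν ^ (-(1:ℝ)/6) *
          (Real.sqrt (-(M' t) * M t)
            + ν ^ ((1:ℝ)/2) * Real.sqrt ((k:ℝ)^2 + (η - k*t)^2)) := by
  refine ⟨√2 * exp π, by positivity, fun ν hν k hk η M M' hM0 hMd hM' t _ => ?_⟩
  set μ := ν ^ ((1:ℝ) / 6)
  have hμ : 0 < μ := rpow_pos_of_pos hν _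
  have hpow (x : ℝ) (n : ℕ) (hx : x = 1 / 6 * n) : ν ^ x = μ ^ n := by
    rw [hx, rpow_mul_natCast hν.le]
  have hrate (s : ℝ) : M' s = -ghostRate (μ ^ 2) (η / k) s * M s := by
    rw [hM', hpow _ 2 (by norm_num), hpow _ 4 (by norm_num), ghostRate]
    ring
  have hlow := exp_neg_pi_le_of_hasDerivAt_ghostRate hM0 (fun s => hrate s ▸ hMd s) t
  have hk1 : (1 : ℝ) ≤ |(k : ℝ)| := by exact_mod_cast Int.one_le_abs hk
  have hkey := mul_exp_neg_pi_div_sqrt_two_le (η := η) (t := t) hμ hk1 hlow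
  rw [show -M' t * M t = ghostRate (μ ^ 2) (η / k) t * M t ^ 2 by rw [hrate]; ring,
    hpow ((1:ℝ)/2) 3 (by norm_num), neg_div, rpow_neg hν.le]
  calc (1 : ℝ) = √2 * exp π * μ⁻¹ * (μ * exp (-π) / √2) := by
        field_simp
        rw [← exp_add, add_neg_cancel, exp_zero]
    _ ≤ _ := by gcongr
end

section
/- Let s ∈ (1/2, 1), λ > 0, and p > d/2. There exists c = c(s) ∈ (0,1) and C = C(s,p) such that for all f, g with finite norms, ‖fg‖_{G^{λ;s}} ≤ C (‖f‖_{G^{λ;s}} ‖⟨∇⟩^p g‖_{G^{cλ;s}} + ‖g‖_{G^{λ;s}} ‖⟨∇⟩^p f‖_{G^{cλ;s}}), where ‖h‖_{G^{λ;s}}² = ∑_k ∫ |ĥ(k,η)|² e^{2λ|k,η|^s} dη on 𝕋 × ℝ (or the analogous definition on ℝᵈ). -/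
open MeasureTheory SchwartzMap Real
open scoped FourierTransform ENNReal

/-- The Gevrey `G^{λ;s}` norm on `ℝᵈ`, defined via the Fourier transform with the
weight `e^{2λ|ξ|^s}`, with an additional polynomial weight `(1+|ξ|)^{2p}` recording
`p` extra derivatives (`p = 0` gives the plain Gevrey norm `G^{λ;s}`). -/
noncomputable def gevreyNorm (d : ℕ) (lam s p : ℝ)
    (f : EuclideanSpace ℝ (Fin d) → ℂ) : ℝ≥0∞ :=
  (∫⁻ ξ : EuclideanSpace ℝ (Fin d),
      ‖𝓕 f ξ‖₊ ^ 2 *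
        ENNReal.ofReal ((1 + ‖ξ‖) ^ (2*p) * Real.exp (2 * lam * ‖ξ‖ ^ s))) ^ ((1:ℝ)/2)

/-! On the Fourier side the product `fg` becomes the convolution `𝓕f ⋆ 𝓕g`. For `0 < s ≤ 1` and
`|η| ≤ |ξ|`, Bernoulli's inequality gives `|ξ + η|^s ≤ |ξ|^s + s |η|^s`, so the weight
`e^{λ|ξ+η|^s}` splits into the full weight on the larger frequency times `e^{sλ|·|^s}` on the
smaller one; this proves the estimate with `c = s`. The weighted transform of `fg` is then bounded
pointwise by two convolutions, each controlled by Young's inequality `‖A ⋆ B‖₂ ≤ ‖A‖₁ ‖B‖₂`, and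
the `L¹` norm of the factor with radius `sλ` is bounded by Cauchy–Schwarz against
`(1 + |η|)^{-p} ∈ L²`, which is where `p > d/2` enters. -/

open scoped Convolution

theorem add_rpow_le_rpow_add_mul_rpow {s a b : ℝ} (hs0 : 0 < s) (hs1 : s ≤ 1) (hb : 0 ≤ b)
    (hba : b ≤ a) : (a + b) ^ s ≤ a ^ s + s * b ^ s := by
  rcases hb.eq_or_lt with rfl | hb0
  · simp [Real.zero_rpow hs0.ne']
  have ha0 : 0 < a := hb0.trans_le hba
  have hbernoulli : (1 + b / a) ^ s ≤ 1 + s * (b / a) :=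
    rpow_one_add_le_one_add_mul_self (by linarith [div_nonneg hb ha0.le]) hs0.le hs1
  have hmono : a ^ (s - 1) * b ≤ b ^ s := by
    calc a ^ (s - 1) * b ≤ b ^ (s - 1) * b := by
          refine mul_le_mul_of_nonneg_right ?_ hb
          exact antitoneOn_rpow_Ioi_of_exponent_nonpos (by linarith : s - 1 ≤ 0) hb0 ha0 hba
      _ = b ^ s := by rw [← Real.rpow_add_one hb0.ne', sub_add_cancel]
  calc (a + b) ^ s = a ^ s * (1 + b / a) ^ s := by
        rw [← Real.mul_rpow ha0.le (by positivity : (0:ℝ) ≤ 1 + b / a), mul_add, mul_one,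
          mul_div_cancel₀ _ ha0.ne']
    _ ≤ a ^ s * (1 + s * (b / a)) := by gcongr
    _ = a ^ s + s * (a ^ (s - 1) * b) := by rw [Real.rpow_sub_one ha0.ne']; field_simp
    _ ≤ a ^ s + s * b ^ s := by gcongr

theorem norm_add_rpow_le {E : Type*} [SeminormedAddGroup E] {s : ℝ} (hs0 : 0 < s) (hs1 : s ≤ 1)
    {x y : E} (h : ‖y‖ ≤ ‖x‖) : ‖x + y‖ ^ s ≤ ‖x‖ ^ s + s * ‖y‖ ^ s :=
  (Real.rpow_le_rpow (norm_nonneg _) (norm_add_le x y) hs0.le).trans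
    (add_rpow_le_rpow_add_mul_rpow hs0 hs1 (norm_nonneg y) h)

section L2

variable {α : Type*} {mα : MeasurableSpace α} {μ : Measure α}

theorem ENNReal.sq_rpow_two_inv (x : ℝ≥0∞) : (x ^ 2) ^ (2⁻¹ : ℝ) = x := by
  simpa using ENNReal.pow_rpow_inv_natCast two_ne_zero x

theorem ENNReal.rpow_two_inv_sq (x : ℝ≥0∞) : (x ^ (2⁻¹ : ℝ)) ^ 2 = x := by
  simpa using ENNReal.rpow_inv_natCast_pow two_ne_zero x

theorem eLpNorm_two_eq_lintegral (f : α → ℝ≥0∞) :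
    eLpNorm f 2 μ = (∫⁻ a, f a ^ 2 ∂μ) ^ (2⁻¹ : ℝ) := by
  simp [eLpNorm_eq_lintegral_rpow_enorm_toReal]

theorem lintegral_mul_le_eLpNorm_two_mul_eLpNorm_two {f g : α → ℝ≥0∞} (hf : AEMeasurable f μ)
    (hg : AEMeasurable g μ) : ∫⁻ a, f a * g a ∂μ ≤ eLpNorm f 2 μ * eLpNorm g 2 μ := by
  simpa [eLpNorm_eq_lintegral_rpow_enorm_toReal]
    using ENNReal.lintegral_mul_le_Lp_mul_Lq μ Real.HolderConjugate.two_two hf hg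

end L2

section LConvolution

variable {G : Type*} {mG : MeasurableSpace G} {μ : Measure G} {f g : G → ℝ≥0∞}

theorem lconvolution_sq_le [AddGroup G] [MeasurableAdd G] [MeasurableNeg G]
    (hf : Measurable f) (hg : Measurable g) (x : G) :
    (f ⋆ₗ[μ] g) x ^ 2 ≤ (∫⁻ y, f y ∂μ) * ∫⁻ y, f y * g (-y + x) ^ 2 ∂μ := by
  have hcs := ENNReal.lintegral_mul_norm_pow_le (μ := μ) (g := fun y => f y * g (-y + x) ^ 2)
    hf.aemeasurable (by fun_prop) (p := 2⁻¹) (q := 2⁻¹) (by norm_num) (by norm_num) (by norm_num)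
  have hsplit : ∀ y, f y ^ (2⁻¹ : ℝ) * (f y * g (-y + x) ^ 2) ^ (2⁻¹ : ℝ) = f y * g (-y + x) := by
    intro y
    rw [← ENNReal.mul_rpow_of_nonneg _ _ (by norm_num), ← mul_assoc, ← sq, ← mul_pow,
      ENNReal.sq_rpow_two_inv]
  simp only [hsplit] at hcs
  calc (f ⋆ₗ[μ] g) x ^ 2
      ≤ ((∫⁻ y, f y ∂μ) ^ (2⁻¹ : ℝ) * (∫⁻ y, f y * g (-y + x) ^ 2 ∂μ) ^ (2⁻¹ : ℝ)) ^ 2 := by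
        rw [lconvolution_def]; gcongr
    _ = _ := by rw [mul_pow, ENNReal.rpow_two_inv_sq, ENNReal.rpow_two_inv_sq]

theorem lintegral_lconvolution_sq_le [AddGroup G] [MeasurableAdd₂ G] [MeasurableNeg G]
    [SFinite μ] [μ.IsAddLeftInvariant] (hf : Measurable f) (hg : Measurable g) :
    ∫⁻ x, (f ⋆ₗ[μ] g) x ^ 2 ∂μ ≤ (∫⁻ y, f y ∂μ) ^ 2 * ∫⁻ x, g x ^ 2 ∂μ := by
  have hmeas : Measurable fun p : G × G => f p.2 * g (-p.2 + p.1) ^ 2 := by fun_prop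
  calc ∫⁻ x, (f ⋆ₗ[μ] g) x ^ 2 ∂μ
      ≤ ∫⁻ x, (∫⁻ y, f y ∂μ) * ∫⁻ y, f y * g (-y + x) ^ 2 ∂μ ∂μ :=
        lintegral_mono (lconvolution_sq_le hf hg)
    _ = (∫⁻ y, f y ∂μ) * ∫⁻ y, ∫⁻ x, f y * g (-y + x) ^ 2 ∂μ ∂μ := by
        rw [lintegral_const_mul _ hmeas.lintegral_prod_right',
          lintegral_lintegral_swap hmeas.aemeasurable]
    _ = (∫⁻ y, f y ∂μ) * ∫⁻ y, f y * ∫⁻ x, g x ^ 2 ∂μ ∂μ := by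
        congr 1
        refine lintegral_congr fun y => ?_
        rw [lintegral_const_mul _ (by fun_prop),
          lintegral_add_left_eq_self (fun x => g x ^ 2) (-y)]
    _ = (∫⁻ y, f y ∂μ) ^ 2 * ∫⁻ x, g x ^ 2 ∂μ := by
        rw [lintegral_mul_const _ hf, sq, mul_assoc]

theorem eLpNorm_lconvolution_le_lintegral_mul [AddGroup G] [MeasurableAdd₂ G] [MeasurableNeg G]
    [SFinite μ] [μ.IsAddLeftInvariant] (hf : Measurable f) (hg : Measurable g) :
    eLpNorm (f ⋆ₗ[μ] g) 2 μ ≤ (∫⁻ y, f y ∂μ) * eLpNorm g 2 μ := by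
  rw [eLpNorm_two_eq_lintegral, eLpNorm_two_eq_lintegral]
  calc (∫⁻ x, (f ⋆ₗ[μ] g) x ^ 2 ∂μ) ^ (2⁻¹ : ℝ)
      ≤ ((∫⁻ y, f y ∂μ) ^ 2 * ∫⁻ x, g x ^ 2 ∂μ) ^ (2⁻¹ : ℝ) := by
        gcongr; exact lintegral_lconvolution_sq_le hf hg
    _ = _ := by rw [ENNReal.mul_rpow_of_nonneg _ _ (by norm_num), ENNReal.sq_rpow_two_inv]

theorem eLpNorm_lconvolution_le_mul_lintegral [AddCommGroup G] [MeasurableAdd₂ G]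
    [MeasurableNeg G] [SFinite μ] [μ.IsAddLeftInvariant] [μ.IsNegInvariant] (hf : Measurable f)
    (hg : Measurable g) : eLpNorm (f ⋆ₗ[μ] g) 2 μ ≤ eLpNorm f 2 μ * ∫⁻ y, g y ∂μ := by
  rw [lconvolution_comm, mul_comm]
  exact eLpNorm_lconvolution_le_lintegral_mul hg hf

end LConvolution

section JapaneseBracket

variable {E : Type*} [NormedAddCommGroup E] [MeasurableSpace E]

theorem lintegral_le_eLpNorm_one_add_norm_rpow_neg_mul [OpensMeasurableSpace E] (μ : Measure E)
    (p : ℝ) {F : E → ℝ≥0∞} (hF : Measurable F) :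
    ∫⁻ ξ, F ξ ∂μ ≤ eLpNorm (fun ξ => (1 + ‖ξ‖) ^ (-p)) 2 μ
      * eLpNorm (fun ξ => ENNReal.ofReal ((1 + ‖ξ‖) ^ p) * F ξ) 2 μ := by
  have hcancel : ∀ ξ : E, ‖(1 + ‖ξ‖) ^ (-p)‖ₑ * (ENNReal.ofReal ((1 + ‖ξ‖) ^ p) * F ξ) = F ξ := by
    intro ξ
    have hpos : (0 : ℝ) < 1 + ‖ξ‖ := by positivity
    rw [Real.enorm_of_nonneg (by positivity), ← mul_assoc, ← ENNReal.ofReal_mul (by positivity),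
      ← Real.rpow_add hpos, neg_add_cancel, Real.rpow_zero, ENNReal.ofReal_one, one_mul]
  calc ∫⁻ ξ, F ξ ∂μ
      = ∫⁻ ξ, ‖(1 + ‖ξ‖) ^ (-p)‖ₑ * (ENNReal.ofReal ((1 + ‖ξ‖) ^ p) * F ξ) ∂μ := by
        simp only [hcancel]
    _ ≤ _ := by
        rw [← eLpNorm_enorm (fun ξ : E => (1 + ‖ξ‖) ^ (-p))]
        exact lintegral_mul_le_eLpNorm_two_mul_eLpNorm_two (by fun_prop) (by fun_prop)

theorem memLp_two_one_add_norm_rpow_neg [NormedSpace ℝ E] [FiniteDimensional ℝ E] [BorelSpace E]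
    (μ : Measure E) [μ.IsAddHaarMeasure] {p : ℝ} (hp : (Module.finrank ℝ E : ℝ) < 2 * p) :
    MemLp (fun ξ : E => (1 + ‖ξ‖) ^ (-p)) 2 μ := by
  refine (memLp_two_iff_integrable_sq (Measurable.aestronglyMeasurable (by fun_prop))).2
    ((integrable_one_add_norm hp).congr (Filter.Eventually.of_forall fun ξ => ?_))
  change (1 + ‖ξ‖) ^ (-(2 * p)) = ((1 + ‖ξ‖) ^ (-p)) ^ 2
  rw [← Real.rpow_natCast, ← Real.rpow_mul (by positivity)]
  ring_nf

end JapaneseBracket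

section Fourier

variable {V : Type*} [NormedAddCommGroup V] [InnerProductSpace ℝ V] [FiniteDimensional ℝ V]
  [MeasurableSpace V] [BorelSpace V]

theorem fourier_mul_eq_convolution (f g : 𝓢(V, ℂ)) :
    𝓕 (fun x => f x * g x) = 𝓕 (⇑f) ⋆[ContinuousLinearMap.mul ℂ ℂ] 𝓕 (⇑g) := by
  have fourier_fourier_neg (k : 𝓢(V, ℂ)) (x : V) : 𝓕 (𝓕 k) (-x) = k x := by
    conv_rhs => rw [← FourierPair.fourierInv_fourier_eq (F := 𝓢(V, ℂ)) k]
    rfl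
  have hinv : 𝓕⁻ (SchwartzMap.convolution (ContinuousLinearMap.mul ℂ ℂ) (𝓕 f) (𝓕 g))
      = SchwartzMap.pairing (ContinuousLinearMap.mul ℂ ℂ) f g := by
    ext x
    simp [fourierInv_apply_eq, fourier_convolution, fourier_fourier_neg]
  funext ξ
  rw [← fourier_coe, ← fourier_coe, ← SchwartzMap.convolution_apply,
    ← FourierInvPair.fourier_fourierInv_eq (F := 𝓢(V, ℂ)) (SchwartzMap.convolution _ (𝓕 f) (𝓕 g)),
    hinv]
  rfl

end Fourier

section Gevrey

variable {V : Type*} [NormedAddCommGroup V]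

noncomputable def gevreyWeight (mu s : ℝ) (ξ : V) : ℝ≥0∞ :=
  ENNReal.ofReal (Real.exp (mu * ‖ξ‖ ^ s))

theorem gevreyWeight_ne_top (mu s : ℝ) (ξ : V) : gevreyWeight mu s ξ ≠ ⊤ :=
  ENNReal.ofReal_ne_top

noncomputable def gevreyProfile (mu s : ℝ) (u : V → ℂ) (ξ : V) : ℝ≥0∞ :=
  ‖u ξ‖ₑ * gevreyWeight mu s ξ

theorem gevreyWeight_add_le_of_norm_le {s lam : ℝ} (hs0 : 0 < s) (hs1 : s ≤ 1) (hlam : 0 ≤ lam)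
    {x y : V} (h : ‖y‖ ≤ ‖x‖) :
    gevreyWeight lam s (x + y) ≤ gevreyWeight lam s x * gevreyWeight (s * lam) s y := by
  rw [gevreyWeight, gevreyWeight, gevreyWeight, ← ENNReal.ofReal_mul (Real.exp_nonneg _),
    ← Real.exp_add]
  gcongr
  nlinarith [norm_add_rpow_le hs0 hs1 h]

theorem gevreyWeight_add_le {s lam : ℝ} (hs0 : 0 < s) (hs1 : s ≤ 1) (hlam : 0 ≤ lam) (x y : V) :
    gevreyWeight lam s (x + y) ≤ gevreyWeight lam s x * gevreyWeight (s * lam) s y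
      + gevreyWeight (s * lam) s x * gevreyWeight lam s y := by
  rcases le_total ‖y‖ ‖x‖ with h | h
  · exact le_add_right (gevreyWeight_add_le_of_norm_le hs0 hs1 hlam h)
  · rw [add_comm x, mul_comm (gevreyWeight (s * lam) s x)]
    exact le_add_left (gevreyWeight_add_le_of_norm_le hs0 hs1 hlam h)

theorem measurable_gevreyProfile [MeasurableSpace V] [OpensMeasurableSpace V] (mu s : ℝ)
    {u : V → ℂ} (hu : Measurable u) :
    Measurable (gevreyProfile mu s u) := by
  unfold gevreyProfile gevreyWeight
  fun_prop

theorem gevreyProfile_convolution_le [MeasurableSpace V] [BorelSpace V] (μ : Measure V)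
    {s lam : ℝ} (hs0 : 0 < s) (hs1 : s ≤ 1) (hlam : 0 ≤ lam)
    {u v : V → ℂ} (hu : Measurable u) (hv : Measurable v) (ξ : V) :
    gevreyProfile lam s (u ⋆[ContinuousLinearMap.mul ℂ ℂ, μ] v) ξ ≤
      (gevreyProfile lam s u ⋆ₗ[μ] gevreyProfile (s * lam) s v) ξ
        + (gevreyProfile (s * lam) s u ⋆ₗ[μ] gevreyProfile lam s v) ξ := by
  have hmeas : ∀ mu mu',
      Measurable fun η => gevreyProfile mu s u η * gevreyProfile mu' s v (-η + ξ) :=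
    fun mu mu' => (measurable_gevreyProfile mu s hu).mul
      ((measurable_gevreyProfile mu' s hv).comp (measurable_neg.add_const ξ))
  rw [lconvolution_def, lconvolution_def, ← lintegral_add_left (hmeas _ _), gevreyProfile,
    convolution_def]
  calc ‖∫ t, ContinuousLinearMap.mul ℂ ℂ (u t) (v (ξ - t)) ∂μ‖ₑ * gevreyWeight lam s ξ
      ≤ (∫⁻ t, ‖u t‖ₑ * ‖v (ξ - t)‖ₑ ∂μ) * gevreyWeight lam s ξ := by
        gcongr
        simpa only [ContinuousLinearMap.mul_apply', enorm_mul]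
          using enorm_integral_le_lintegral_enorm (fun t => u t * v (ξ - t))
    _ = ∫⁻ t, ‖u t‖ₑ * ‖v (-t + ξ)‖ₑ * gevreyWeight lam s (t + (-t + ξ)) ∂μ := by
        rw [← lintegral_mul_const' _ _ (gevreyWeight_ne_top _ _ _)]
        simp only [neg_add_eq_sub, add_sub_cancel]
    _ ≤ _ := by
        refine lintegral_mono fun t => ?_
        grw [gevreyWeight_add_le hs0 hs1 hlam]
        exact le_of_eq (by simp only [gevreyProfile]; ring)

end Gevrey

theorem gevreyNorm_eq_eLpNorm (d : ℕ) (mu s p : ℝ) (h : EuclideanSpace ℝ (Fin d) → ℂ) :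
    gevreyNorm d mu s p h = eLpNorm
      (fun ξ => ENNReal.ofReal ((1 + ‖ξ‖) ^ p) * gevreyProfile mu s (𝓕 h) ξ) 2 volume := by
  rw [eLpNorm_two_eq_lintegral, gevreyNorm, one_div]
  refine congrArg (· ^ (2⁻¹ : ℝ)) (lintegral_congr fun ξ => ?_)
  have hweight : (1 + ‖ξ‖) ^ (2 * p) * Real.exp (2 * mu * ‖ξ‖ ^ s)
      = ((1 + ‖ξ‖) ^ p * Real.exp (mu * ‖ξ‖ ^ s)) ^ 2 := by
    rw [mul_pow, ← Real.exp_nat_mul, ← Real.rpow_mul_natCast (by positivity : (0:ℝ) ≤ 1 + ‖ξ‖)]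
    push_cast
    ring_nf
  rw [gevreyProfile, gevreyWeight, hweight, ENNReal.ofReal_pow (by positivity),
    ENNReal.ofReal_mul (by positivity), enorm_eq_nnnorm]
  ring

theorem gevreyNorm_zero_eq_eLpNorm (d : ℕ) (mu s : ℝ) (h : EuclideanSpace ℝ (Fin d) → ℂ) :
    gevreyNorm d mu s 0 h = eLpNorm (gevreyProfile mu s (𝓕 h)) 2 volume := by
  simp [gevreyNorm_eq_eLpNorm]

theorem gevreyNorm_mul_le {d : ℕ} {s lam : ℝ} (hs0 : 0 < s) (hs1 : s ≤ 1) (hlam : 0 ≤ lam)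
    (p : ℝ) (f g : 𝓢(EuclideanSpace ℝ (Fin d), ℂ)) :
    gevreyNorm d lam s 0 (fun x => f x * g x)
      ≤ eLpNorm (fun ξ : EuclideanSpace ℝ (Fin d) => (1 + ‖ξ‖) ^ (-p)) 2 volume
        * (gevreyNorm d lam s 0 (⇑f) * gevreyNorm d (s * lam) s p (⇑g)
          + gevreyNorm d lam s 0 (⇑g) * gevreyNorm d (s * lam) s p (⇑f)) := by
  have hf : Measurable (𝓕 ⇑f) := (𝓕 f).continuous.measurable
  have hg : Measurable (𝓕 ⇑g) := (𝓕 g).continuous.measurable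
  simp only [gevreyNorm_zero_eq_eLpNorm, fourier_mul_eq_convolution]
  simp only [gevreyNorm_eq_eLpNorm]
  set K := eLpNorm (fun ξ : EuclideanSpace ℝ (Fin d) => (1 + ‖ξ‖) ^ (-p)) 2 volume
  set F := gevreyProfile lam s (𝓕 ⇑f)
  set Fc := gevreyProfile (s * lam) s (𝓕 ⇑f)
  set G := gevreyProfile lam s (𝓕 ⇑g)
  set Gc := gevreyProfile (s * lam) s (𝓕 ⇑g)
  have hF : Measurable F := measurable_gevreyProfile _ _ hf
  have hFc : Measurable Fc := measurable_gevreyProfile _ _ hf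
  have hG : Measurable G := measurable_gevreyProfile _ _ hg
  have hGc : Measurable Gc := measurable_gevreyProfile _ _ hg
  calc eLpNorm (gevreyProfile lam s (𝓕 ⇑f ⋆[ContinuousLinearMap.mul ℂ ℂ] 𝓕 ⇑g)) 2 volume
      ≤ eLpNorm (F ⋆ₗ Gc + Fc ⋆ₗ G) 2 volume :=
        eLpNorm_mono_enorm fun ξ => by
          simpa using gevreyProfile_convolution_le volume hs0 hs1 hlam hf hg ξ
    _ ≤ eLpNorm (F ⋆ₗ Gc) 2 volume + eLpNorm (Fc ⋆ₗ G) 2 volume :=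
        eLpNorm_add_le (measurable_lconvolution _ hF hGc).aestronglyMeasurable
          (measurable_lconvolution _ hFc hG).aestronglyMeasurable one_le_two
    _ ≤ eLpNorm F 2 volume * (∫⁻ ξ, Gc ξ) + (∫⁻ ξ, Fc ξ) * eLpNorm G 2 volume :=
        add_le_add (eLpNorm_lconvolution_le_mul_lintegral hF hGc)
          (eLpNorm_lconvolution_le_lintegral_mul hFc hG)
    _ ≤ eLpNorm F 2 volume
          * (K * eLpNorm (fun ξ => ENNReal.ofReal ((1 + ‖ξ‖) ^ p) * Gc ξ) 2 volume)
        + K * eLpNorm (fun ξ => ENNReal.ofReal ((1 + ‖ξ‖) ^ p) * Fc ξ) 2 volume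
          * eLpNorm G 2 volume := by
        gcongr
        · exact lintegral_le_eLpNorm_one_add_norm_rpow_neg_mul volume p hGc
        · exact lintegral_le_eLpNorm_one_add_norm_rpow_neg_mul volume p hFc
    _ = _ := by ring

/-- The Gevrey product rule: for `s ∈ (1/2, 1)`, `λ > 0`, `p > d/2`, there are
`c = c(s) ∈ (0,1)` and a finite constant `C = C(s,p)` such that
`‖fg‖_{G^{λ;s}} ≤ C (‖f‖_{G^{λ;s}} ‖⟨∇⟩^p g‖_{G^{cλ;s}} + ‖g‖_{G^{λ;s}} ‖⟨∇⟩^p f‖_{G^{cλ;s}})`.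
In each term only one factor carries the full Gevrey radius `λ`; the other carries
the strictly smaller radius `cλ` with `c < 1`. -/
theorem stmt_18 (d : ℕ) (s : ℝ) (hs : s ∈ Set.Ioo (1/2 : ℝ) 1)
    (lam : ℝ) (hlam : 0 < lam) (p : ℝ) (hp : (d:ℝ)/2 < p) :
    ∃ c ∈ Set.Ioo (0:ℝ) 1, ∃ C : ℝ≥0∞, C ≠ ⊤ ∧
      ∀ f g : 𝓢(EuclideanSpace ℝ (Fin d), ℂ),
        gevreyNorm d lam s 0 (fun x => f x * g x)
          ≤ C * (gevreyNorm d lam s 0 (⇑f) * gevreyNorm d (c * lam) s p (⇑g)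
              + gevreyNorm d lam s 0 (⇑g) * gevreyNorm d (c * lam) s p (⇑f)) := by
  obtain ⟨hs_half, hs1⟩ := hs
  have hs0 : 0 < s := by linarith
  refine ⟨s, ⟨hs0, hs1⟩, _, ?_, gevreyNorm_mul_le hs0 hs1.le hlam.le p⟩
  exact (memLp_two_one_add_norm_rpow_neg volume
    (by rw [finrank_euclideanSpace_fin]; linarith)).eLpNorm_ne_top
end
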